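/- For every n ≥ 3 and every integer t with n ≤ t ≤ 2(n-1), there exists a primitive (0,1) companion matrix A of order n with exp(A) = t. Consequently, the interval [n, 2(n-1)] is contained in the exponent set E(CP_n). -/

import Mathlib

open Matrix BigOperators

/-- A nonnegative square matrix is primitive if some positive power has all entries positive. -/
def IsPrimitive {n : ℕ} (A : Matrix (Fin n) (Fin n) ℝ) : Prop :=
  ∃ m : ℕ, 0 < m ∧ ∀ i j, 0 < (A ^ m) i j

/-- The exponent of a primitive matrix: the least positive `m` with `A ^ m > 0`. -/
noncomputable def matExp {n : ℕ} (A : Matrix (Fin n) (Fin n) ℝ) : ℕ :=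
  sInf {m : ℕ | 0 < m ∧ ∀ i j, 0 < (A ^ m) i j}

/-- `(0,1)` companion matrix: superdiagonal ones on the first `n-1` rows,
arbitrary `(0,1)` last row, all other entries zero. -/
def IsCompanion {n : ℕ} (A : Matrix (Fin n) (Fin n) ℝ) : Prop :=
  (∀ i j, A i j = 0 ∨ A i j = 1) ∧
  (∀ i j : Fin n, (i : ℕ) + 1 < n → (A i j = 1 ↔ (j : ℕ) = (i : ℕ) + 1))

/-- `exp(A:i,j)`: least positive `k` such that `(A^l) i j > 0` for all `l ≥ k`. -/
noncomputable def expIJ {n : ℕ} (A : Matrix (Fin n) (Fin n) ℝ) (i j : Fin n) : ℕ :=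
  sInf {k : ℕ | 0 < k ∧ ∀ l, k ≤ l → 0 < (A ^ l) i j}

/-- `exp(A:i)`: least positive `p` such that every entry of row `i` of `A ^ p` is positive. -/
noncomputable def expRow {n : ℕ} (A : Matrix (Fin n) (Fin n) ℝ) (i : Fin n) : ℕ :=
  sInf {p : ℕ | 0 < p ∧ ∀ j, 0 < (A ^ p) i j}

/-- The digraph of `A` has an elementary cycle of length `k`. -/
def HasElemCycle {n : ℕ} (A : Matrix (Fin n) (Fin n) ℝ) (k : ℕ) : Prop :=
  0 < k ∧ ∃ c : ℕ → Fin n, c k = c 0 ∧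
    (∀ i j, i < k → j < k → c i = c j → i = j) ∧
    ∀ i < k, A (c i) (c (i + 1)) = 1

/-- `m(U)`: the maximal length of a run of consecutive integers contained in `U`. -/
noncomputable def runMax (U : Set ℕ) : ℕ :=
  sSup {k : ℕ | ∃ a : ℕ, ∀ t < k, a + t ∈ U}

/-- The Frobenius number of a set `L`: the least `N` such that every `m ≥ N` is a
nonnegative integer combination of elements of `L`. -/
noncomputable def frobNum (L : Set ℕ) : ℕ :=
  sInf {N : ℕ | ∀ m, N ≤ m → m ∈ AddSubmonoid.closure L}

/-- Irreducibility: for all `i j` there is a walk of some positive length from `i` to `j`. -/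
def IsIrreducibleMat {n : ℕ} (A : Matrix (Fin n) (Fin n) ℝ) : Prop :=
  ∀ i j, ∃ k : ℕ, 0 < k ∧ 0 < (A ^ k) i j

/-
The matrix whose last row has ones exactly in column `0` and in columns `s, …, n - 1`
(`1 ≤ s ≤ n - 1`, `s = t - n + 1`) has exponent `t = n + s - 1`. Its digraph is the path
`0 → 1 → ⋯ → n - 1` together with arcs from `n - 1` to `0` and to `s, …, n - 1`, including a
loop at `n - 1`. Every `i → j` walk of length `n + s - 1` can be built as: go up to `n - 1`,
loop, jump to `0` or to `j`, go up to `j`. Conversely a walk from `0` to `s - 1` either stays on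
the path (length `s - 1`) or passes through the arc `n - 1 → 0` (length at least `n + s - 1`),
and a closed walk at `0` has length `0` or at least `n`; so no power below `n + s - 1` is
positive.
-/

namespace Matrix

variable {ι R : Type*} [Fintype ι] [DecidableEq ι]

theorem pow_add_apply_pos [Semiring R] [PartialOrder R] [IsStrictOrderedRing R]
    {A : Matrix ι ι R} (hA : ∀ i j, 0 ≤ A i j) {a b : ℕ} {i k j : ι}
    (h₁ : 0 < (A ^ a) i k) (h₂ : 0 < (A ^ b) k j) : 0 < (A ^ (a + b)) i j := by
  rw [pow_add, mul_apply]
  exact Finset.sum_pos'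
    (fun x _ => mul_nonneg (pow_apply_nonneg hA a i x) (pow_apply_nonneg hA b x j))
    ⟨k, Finset.mem_univ k, mul_pos h₁ h₂⟩

theorem pow_apply_ne_zero_induction [Semiring R] {A : Matrix ι ι R} {i₀ : ι}
    (P : ℕ → ι → Prop) (h₀ : P 0 i₀) (hstep : ∀ m k j, P m k → A k j ≠ 0 → P (m + 1) j) :
    ∀ m j, (A ^ m) i₀ j ≠ 0 → P m j := by
  intro m
  induction m with
  | zero =>
    intro j h
    obtain rfl : i₀ = j := by by_contra hne; exact h (one_apply_ne hne)
    exact h₀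
  | succ m ih =>
    intro j h
    rw [pow_succ, mul_apply] at h
    obtain ⟨k, -, hk⟩ := Finset.exists_ne_zero_of_sum_ne_zero h
    exact hstep m k j (ih k (left_ne_zero_of_mul hk)) (right_ne_zero_of_mul hk)

end Matrix

open Matrix

theorem matExp_eq_of_pow_pos {n t : ℕ} {A : Matrix (Fin n) (Fin n) ℝ} (ht : 0 < t)
    (hpos : ∀ i j, 0 < (A ^ t) i j)
    (hmin : ∀ m, 0 < m → m < t → ¬∀ i j, 0 < (A ^ m) i j) : matExp A = t := by
  have hmem : t ∈ {m : ℕ | 0 < m ∧ ∀ i j, 0 < (A ^ m) i j} := ⟨ht, hpos⟩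
  refine le_antisymm (Nat.sInf_le hmem) (le_csInf ⟨t, hmem⟩ ?_)
  rintro m ⟨hm, hmpos⟩
  by_contra! hlt
  exact hmin m hm hlt hmpos

namespace IsCompanion

variable {n : ℕ} {A : Matrix (Fin n) (Fin n) ℝ}

theorem nonneg (hA : IsCompanion A) (i j : Fin n) : 0 ≤ A i j := by
  rcases hA.1 i j with h | h <;> simp [h]

theorem pow_apply_pos_of_val_eq_add (hA : IsCompanion A) :
    ∀ (d : ℕ) (i j : Fin n), (j : ℕ) = i + d → 0 < (A ^ d) i j := by
  intro d
  induction d with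
  | zero =>
    intro i j h
    obtain rfl : j = i := Fin.ext h
    simp
  | succ d ih =>
    intro i j h
    have hsucc : (i : ℕ) + 1 < n := by omega
    have hedge : 0 < (A ^ 1) i ⟨i + 1, hsucc⟩ := by
      rw [pow_one, (hA.2 i _ hsucc).2 rfl]; norm_num
    have hrest := ih ⟨i + 1, hsucc⟩ j (by simp only; omega)
    simpa only [Nat.add_comm 1 d] using pow_add_apply_pos hA.nonneg hedge hrest

end IsCompanion

def tailCompanion (n s : ℕ) : Matrix (Fin n) (Fin n) ℝ := fun i j =>
  if (i : ℕ) + 1 < n then (if (j : ℕ) = i + 1 then 1 else 0)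
  else (if (j : ℕ) = 0 ∨ s ≤ j then 1 else 0)

namespace tailCompanion

variable {n s : ℕ}

theorem isCompanion : IsCompanion (tailCompanion n s) := by
  refine ⟨fun i j => ?_, fun i j hi => ?_⟩
  · unfold tailCompanion; split_ifs <;> simp
  · unfold tailCompanion; rw [if_pos hi]; split_ifs with h <;> simp [h]

theorem last_apply_pos (hn : 0 < n) {j : Fin n} (hj : (j : ℕ) = 0 ∨ s ≤ j) :
    0 < tailCompanion n s ⟨n - 1, by omega⟩ j := by
  unfold tailCompanion
  rw [if_neg (by simp only; omega), if_pos hj]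
  norm_num

theorem val_of_apply_ne_zero {k j : Fin n} (h : tailCompanion n s k j ≠ 0) :
    ((k : ℕ) + 1 < n ∧ (j : ℕ) = k + 1) ∨ ((k : ℕ) + 1 = n ∧ ((j : ℕ) = 0 ∨ s ≤ j)) := by
  unfold tailCompanion at h
  split_ifs at h with h₁ h₂ h₂
  · exact .inl ⟨h₁, h₂⟩
  · exact absurd rfl h
  · exact .inr ⟨by omega, h₂⟩
  · exact absurd rfl h

theorem pow_apply_pos (hs : 0 < s) (hsn : s < n) (i j : Fin n) :
    0 < (tailCompanion n s ^ (n + s - 1)) i j := by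
  have hA := isCompanion (n := n) (s := s)
  let last : Fin n := ⟨n - 1, by omega⟩
  obtain ⟨c, hc⟩ : ∃ c : Fin n, ((c : ℕ) = 0 ∧ (j : ℕ) < s) ∨ (s ≤ (c : ℕ) ∧ c = j) := by
    by_cases hjs : (j : ℕ) < s
    · exact ⟨⟨0, by omega⟩, .inl ⟨rfl, hjs⟩⟩
    · exact ⟨j, .inr ⟨by omega, rfl⟩⟩
  have hup := hA.pow_apply_pos_of_val_eq_add (n - 1 - i) i last (by simp only [last]; omega)
  have hloop : ∀ L, 0 < (tailCompanion n s ^ L) last last := by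
    have hedge : 0 < (tailCompanion n s ^ 1) last last := by
      simpa using last_apply_pos (by omega) (.inr (by simp only [last]; omega))
    intro L
    induction L with
    | zero => simp
    | succ L ih => exact pow_add_apply_pos hA.nonneg ih hedge
  have hjump : 0 < (tailCompanion n s ^ 1) last c := by
    simpa using last_apply_pos (by omega) (by omega)
  have hwalk := hA.pow_apply_pos_of_val_eq_add ((j : ℕ) - c) c j (by omega)
  have hlen : n - 1 - i + ((s + i + c - j - 1) + (1 + (j - c))) = n + s - 1 := by omega
  rw [← hlen]
  exact pow_add_apply_pos hA.nonneg hup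
    (pow_add_apply_pos hA.nonneg (hloop _) (pow_add_apply_pos hA.nonneg hjump hwalk))

theorem pow_zero_apply_ne_zero (hs : 0 < s) (hsn : s < n) :
    ∀ m (j : Fin n), (tailCompanion n s ^ m) ⟨0, by omega⟩ j ≠ 0 →
      (j : ℕ) ≤ m ∧ ((j : ℕ) < s → m = j ∨ n + j ≤ m) := by
  refine pow_apply_ne_zero_induction _ (by simp) fun m k j hk hkj => ?_
  have := val_of_apply_ne_zero hkj
  omega

theorem not_pow_pos_of_lt (hs : 0 < s) (hsn : s < n) {m : ℕ} (hm : 0 < m)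
    (hmt : m < n + s - 1) : ¬∀ i j, 0 < (tailCompanion n s ^ m) i j := by
  intro hpos
  have key := fun j => pow_zero_apply_ne_zero hs hsn m j (hpos _ j).ne'
  by_cases hmn : m < n
  · have := key ⟨0, by omega⟩
    simp only at this
    omega
  · have := key ⟨s - 1, by omega⟩
    simp only at this
    omega

end tailCompanion

theorem stmt5 {n : ℕ} (hn : 3 ≤ n) (t : ℕ) (ht1 : n ≤ t) (ht2 : t ≤ 2 * (n - 1)) :
    ∃ A : Matrix (Fin n) (Fin n) ℝ, IsCompanion A ∧ _root_.IsPrimitive A ∧ matExp A = t := by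
  have hs : 0 < t + 1 - n := by omega
  have hsn : t + 1 - n < n := by omega
  have ht : n + (t + 1 - n) - 1 = t := by omega
  have hpos := tailCompanion.pow_apply_pos hs hsn
  rw [ht] at hpos
  refine ⟨tailCompanion n (t + 1 - n), tailCompanion.isCompanion, ⟨t, by omega, hpos⟩,
    matExp_eq_of_pow_pos (by omega) hpos fun m hm hmt => ?_⟩
  exact tailCompanion.not_pow_pos_of_lt hs hsn hm (by omega)
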